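/- Let f : F_2^m → F_2 with f(0)=0, let s_v = (v·x)_{x ∈ F_2^m\{0}} and f = (f(x))_{x ∈ F_2^m\{0}}. For distinct a, b ∈ F_2^m, the codeword f + s_a covers f + s_b if and only if f̂(a) − f̂(b) = 2^m. -/

import Mathlib

open Finset

/-- Standard inner product on `F_2^m`. -/
def ip {m : ℕ} (w x : Fin m → ZMod 2) : ZMod 2 := ∑ i, w i * x i

/-- Signed Walsh transform `f̂(w) = Σ_x (-1)^(f(x)+w·x)`. -/
def walshS {m : ℕ} (f : (Fin m → ZMod 2) → ZMod 2) (w : Fin m → ZMod 2) : ℤ :=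
  ∑ x : Fin m → ZMod 2, (-1 : ℤ) ^ ((f x + ip w x).val)

/-- `covers c d` : support containment `Supp(c) ⊆ Supp(d)`, i.e. `c ⪯ d`. -/
def covers {ι : Type*} (c d : ι → ZMod 2) : Prop := ∀ x, c x ≠ 0 → d x ≠ 0

/-!
Write `χ u = (-1)^u`. For bits `u, v` the product `(1 - χ u) (1 + χ v)` is `4` when `u = 1, v = 0`
and `0` otherwise, so `c ⪯ d` iff `Σ_x (1 - χ (c x)) (1 + χ (d x)) = 0`, a sum of nonnegative
terms. For `c = f + s_a`, `d = f + s_b` this sum expands to `2^m - Σ_x χ((a + b)·x) - (f̂(a) - f̂(b))`,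
and the character sum vanishes because `a + b ≠ 0`. The coordinate `x = 0`, absent from the codewords,
never obstructs covering since `f(0) = 0`.
-/

def signZ2 (u : ZMod 2) : ℤ := (-1) ^ u.val

lemma signZ2_add (u v : ZMod 2) : signZ2 (u + v) = signZ2 u * signZ2 v := by
  revert u v; decide

lemma signZ2_one : signZ2 1 = -1 := rfl

lemma ip_eq_dotProduct {m : ℕ} (w x : Fin m → ZMod 2) : ip w x = w ⬝ᵥ x := rfl

lemma walshS_eq_sum_signZ2 {m : ℕ} (f : (Fin m → ZMod 2) → ZMod 2) (w : Fin m → ZMod 2) :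
    walshS f w = ∑ x, signZ2 (f x + w ⬝ᵥ x) := rfl

/-- Translating by a basis vector `e i` with `c i = 1` flips every sign of the sum. -/
lemma sum_signZ2_dotProduct_eq_zero {ι : Type*} [Fintype ι] [DecidableEq ι] {c : ι → ZMod 2}
    (hc : c ≠ 0) : ∑ x, signZ2 (c ⬝ᵥ x) = 0 := by
  obtain ⟨i, hi⟩ : ∃ i, c i ≠ 0 := Function.ne_iff.mp hc
  have hci : c i = 1 := by revert hi; generalize c i = u; revert u; decide
  have hterm (x : ι → ZMod 2) : signZ2 (c ⬝ᵥ (x + Pi.single i 1)) = -signZ2 (c ⬝ᵥ x) := by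
    rw [dotProduct_add, dotProduct_single, hci, mul_one, signZ2_add, signZ2_one, mul_neg_one]
  have hshift := Equiv.sum_comp (Equiv.addRight (Pi.single i 1)) fun x => signZ2 (c ⬝ᵥ x)
  simp only [Equiv.coe_addRight, hterm, Finset.sum_neg_distrib] at hshift
  linarith

lemma covering_defect_nonneg (u v : ZMod 2) : 0 ≤ (1 - signZ2 u) * (1 + signZ2 v) := by
  revert u v; decide

lemma covering_defect_eq_zero_iff (u v : ZMod 2) :
    (1 - signZ2 u) * (1 + signZ2 v) = 0 ↔ (u ≠ 0 → v ≠ 0) := by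
  revert u v; decide

lemma covers_iff_sum_covering_defect_eq_zero {ι : Type*} [Fintype ι] (c d : ι → ZMod 2) :
    covers c d ↔ ∑ x, (1 - signZ2 (c x)) * (1 + signZ2 (d x)) = 0 := by
  rw [Finset.sum_eq_zero_iff_of_nonneg fun x _ => covering_defect_nonneg _ _]
  simp only [Finset.mem_univ, true_implies, covering_defect_eq_zero_iff, covers]

lemma covers_subtype_ne_iff {ι : Type*} {c d : ι → ZMod 2} {x₀ : ι} (hc : c x₀ = 0) :
    covers (fun x : {x // x ≠ x₀} => c x.1) (fun x : {x // x ≠ x₀} => d x.1) ↔ covers c d := by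
  refine ⟨fun h x hx => ?_, fun h x hx => h x.1 hx⟩
  have hx₀ : x ≠ x₀ := by rintro rfl; exact hx hc
  exact h ⟨x, hx₀⟩ hx

lemma walshS_sub_walshS {m : ℕ} (f : (Fin m → ZMod 2) → ZMod 2) {a b : Fin m → ZMod 2}
    (hab : a ≠ b) :
    walshS f a - walshS f b =
      2 ^ m - ∑ x, (1 - signZ2 (f x + a ⬝ᵥ x)) * (1 + signZ2 (f x + b ⬝ᵥ x)) := by
  have hsum : a + b ≠ 0 := fun h =>
    hab (funext fun i => CharTwo.add_eq_zero.mp (congrFun h i))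
  have hprod (x : Fin m → ZMod 2) :
      signZ2 (f x + a ⬝ᵥ x) * signZ2 (f x + b ⬝ᵥ x) = signZ2 ((a + b) ⬝ᵥ x) := by
    rw [← signZ2_add, add_dotProduct, add_add_add_comm, CharTwo.add_self_eq_zero, zero_add]
  have hexpand (x : Fin m → ZMod 2) :
      (1 - signZ2 (f x + a ⬝ᵥ x)) * (1 + signZ2 (f x + b ⬝ᵥ x)) =
        1 - signZ2 ((a + b) ⬝ᵥ x) - (signZ2 (f x + a ⬝ᵥ x) - signZ2 (f x + b ⬝ᵥ x)) := by
    rw [← hprod]; ring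
  rw [walshS_eq_sum_signZ2, walshS_eq_sum_signZ2, Finset.sum_congr rfl fun x _ => hexpand x,
    Finset.sum_sub_distrib, Finset.sum_sub_distrib, sum_signZ2_dotProduct_eq_zero hsum]
  simp

theorem stmt_4 (m : ℕ) (f : (Fin m → ZMod 2) → ZMod 2) (hf0 : f 0 = 0)
    (a b : Fin m → ZMod 2) (hab : a ≠ b) :
    covers (fun x : {x : Fin m → ZMod 2 // x ≠ 0} => f x.1 + ip a x.1)
           (fun x : {x : Fin m → ZMod 2 // x ≠ 0} => f x.1 + ip b x.1)
      ↔ walshS f a - walshS f b = 2 ^ m := by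
  have hzero : f 0 + ip a 0 = 0 := by simp [hf0, ip_eq_dotProduct]
  rw [covers_subtype_ne_iff (c := fun x => f x + ip a x) (d := fun x => f x + ip b x) hzero,
    covers_iff_sum_covering_defect_eq_zero, walshS_sub_walshS f hab]
  simp only [ip_eq_dotProduct]
  constructor <;> intro h <;> linarith
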